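/- arXiv:1201.2141 — 10 statements merged into one kernel-verified Lean document; each statement's English description precedes it below -/
import Mathlib

section
/- As t → ∞, both derivatives a1'(t) and a2'(t) converge to the common limit (α21·v1 + α12·v2)/α. -/
/-!
The gap `d = a2 - a1` solves the scalar linear equation `d' = -α (d - (v2 - v1) / α)`, so
`d - (v2 - v1) / α` decays like `exp (-α t)`. Both `a1'` and `a2'` are affine in `d`, so they
converge, and substituting the limit of `d` gives the same value for both.
-/

open Filter Real Topology

/-- Multiplying by `exp (k t)` turns the equation into `g' = 0` for `g t = (f t - c) * exp (k t)`. -/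
theorem sub_eq_mul_exp_of_hasDerivAt_eq_neg_mul_sub {f : ℝ → ℝ} {k c : ℝ}
    (hf : ∀ t, 0 ≤ t → HasDerivAt f (-k * (f t - c)) t) {t : ℝ} (ht : 0 ≤ t) :
    f t - c = (f 0 - c) * exp (-(k * t)) := by
  set g : ℝ → ℝ := fun s => (f s - c) * exp (k * s)
  have hg : ∀ s, 0 ≤ s → HasDerivAt g 0 s := by
    intro s hs
    have hexp : HasDerivAt (fun s => exp (k * s)) (exp (k * s) * k) s := by
      simpa using ((hasDerivAt_id s).const_mul k).exp
    refine (((hf s hs).sub_const c).mul hexp).congr_deriv ?_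
    ring
  have hconst : g t = g 0 :=
    constant_of_has_deriv_right_zero
      (fun s hs => (hg s hs.1).continuousAt.continuousWithinAt)
      (fun s hs => (hg s hs.1).hasDerivWithinAt) t ⟨ht, le_rfl⟩
  simp only [g, mul_zero, exp_zero, mul_one] at hconst
  rw [exp_neg, ← hconst, mul_inv_cancel_right₀ (exp_pos _).ne']

theorem tendsto_of_hasDerivAt_eq_neg_mul_sub {f : ℝ → ℝ} {k c : ℝ} (hk : 0 < k)
    (hf : ∀ t, 0 ≤ t → HasDerivAt f (-k * (f t - c)) t) :
    Tendsto f atTop (𝓝 c) := by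
  have hexp : Tendsto (fun t => exp (-(k * t))) atTop (𝓝 0) :=
    tendsto_exp_atBot.comp <| tendsto_neg_atTop_atBot.comp <|
      tendsto_id.const_mul_atTop hk
  have hlim : Tendsto (fun t => c + (f 0 - c) * exp (-(k * t))) atTop (𝓝 c) := by
    simpa using tendsto_const_nhds.add (hexp.const_mul (f 0 - c))
  refine hlim.congr' ?_
  filter_upwards [eventually_ge_atTop 0] with t ht
  linarith [sub_eq_mul_exp_of_hasDerivAt_eq_neg_mul_sub hf ht]

/-- As `t → ∞`, both derivatives `a1'` and `a2'` converge to
`(α21 * v1 + α12 * v2)/(α12 + α21)`. -/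
theorem stmt_2 (v1 v2 α12 α21 : ℝ) (h12 : 0 < α12) (h21 : 0 < α21)
    (a1 a2 : ℝ → ℝ)
    (h1 : ∀ t : ℝ, 0 ≤ t → HasDerivAt a1 (v1 + α12 * (a2 t - a1 t)) t)
    (h2 : ∀ t : ℝ, 0 ≤ t → HasDerivAt a2 (v2 + α21 * (a1 t - a2 t)) t) :
    Filter.Tendsto (deriv a1) Filter.atTop
      (nhds ((α21 * v1 + α12 * v2) / (α12 + α21))) ∧
    Filter.Tendsto (deriv a2) Filter.atTop
      (nhds ((α21 * v1 + α12 * v2) / (α12 + α21))) := by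
  have hα : 0 < α12 + α21 := add_pos h12 h21
  set L := (v2 - v1) / (α12 + α21)
  have hgap : Tendsto (a2 - a1) atTop (𝓝 L) := by
    refine tendsto_of_hasDerivAt_eq_neg_mul_sub hα fun t ht => ?_
    refine ((h2 t ht).sub (h1 t ht)).congr_deriv ?_
    simp only [L, Pi.sub_apply]
    field_simp
    ring
  have hd1 : (fun t => v1 + α12 * (a2 - a1) t) =ᶠ[atTop] deriv a1 := by
    filter_upwards [eventually_ge_atTop 0] with t ht
    exact (h1 t ht).deriv.symm
  have hd2 : (fun t => v2 - α21 * (a2 - a1) t) =ᶠ[atTop] deriv a2 := by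
    filter_upwards [eventually_ge_atTop 0] with t ht
    rw [(h2 t ht).deriv]
    simp only [Pi.sub_apply]
    ring
  have hlim1 : v1 + α12 * L = (α21 * v1 + α12 * v2) / (α12 + α21) := by
    simp only [L]
    field_simp
    ring
  have hlim2 : v2 - α21 * L = (α21 * v1 + α12 * v2) / (α12 + α21) := by
    simp only [L]
    field_simp
    ring
  exact ⟨hlim1 ▸ ((hgap.const_mul α12).const_add v1).congr' hd1,
    hlim2 ▸ ((hgap.const_mul α21).const_sub v2).congr' hd2⟩
end

section
/- Set v = (α21·v1 + α12·v2)/α. There exist real constants a10 and a20 such that a1(t) − v·t → a10 and a2(t) − v·t → a20 as t → ∞ (i.e. a_i(t) = v·t + a_{i0} + o(1)). -/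
/-!
The gap `a1 - a2` solves the relaxation equation `d' = (v1 - v2) - α d`, so it converges to
`(v1 - v2) / α`, while the weighted mean `α21 a1 + α12 a2` has the constant derivative
`α21 v1 + α12 v2 = α v` because the coupling terms cancel. Since
`α a1 = (α21 a1 + α12 a2) + α12 (a1 - a2)`, the quantity `a1 t - v t` converges; `a2` follows by
exchanging the indices.
-/

open Filter Topology

theorem eq_of_hasDerivAt_zero_of_le {f : ℝ → ℝ} {a : ℝ} (hf : ∀ t, a ≤ t → HasDerivAt f 0 t)
    {t : ℝ} (ht : a ≤ t) : f t = f a :=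
  constant_of_has_deriv_right_zero (fun x hx => (hf x hx.1).continuousAt.continuousWithinAt)
    (fun x hx => (hf x hx.1).hasDerivWithinAt) t ⟨ht, le_rfl⟩

theorem eq_add_mul_of_hasDerivAt_const {f : ℝ → ℝ} {c : ℝ} (hf : ∀ t, 0 ≤ t → HasDerivAt f c t)
    {t : ℝ} (ht : 0 ≤ t) : f t = f 0 + c * t := by
  have h := eq_of_hasDerivAt_zero_of_le (f := fun t => f t - c * t)
    (fun t ht => ((hf t ht).sub ((hasDerivAt_id t).const_mul c)).congr_deriv (by ring)) ht
  linarith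

theorem tendsto_of_hasDerivAt_eq_sub_mul {f : ℝ → ℝ} {b α : ℝ} (hα : 0 < α)
    (hf : ∀ t, 0 ≤ t → HasDerivAt f (b - α * f t) t) : Tendsto f atTop (𝓝 (b / α)) := by
  have hexp (t : ℝ) : HasDerivAt (fun t => Real.exp (α * t)) (Real.exp (α * t) * α) t := by
    simpa using ((hasDerivAt_id t).const_mul α).exp
  have hconst (t : ℝ) (ht : 0 ≤ t) :
      HasDerivAt (fun t => (f t - b / α) * Real.exp (α * t)) 0 t :=
    (((hf t ht).sub_const (b / α)).mul (hexp t)).congr_deriv (by field_simp; ring)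
  have hsol : ∀ t, 0 ≤ t → f t = b / α + (f 0 - b / α) * Real.exp (-(α * t)) := by
    intro t ht
    have h := eq_of_hasDerivAt_zero_of_le hconst ht
    simp only [mul_zero, Real.exp_zero, mul_one] at h
    rw [Real.exp_neg, ← h, mul_inv_cancel_right₀ (Real.exp_ne_zero _)]
    ring
  have hdecay : Tendsto (fun t => Real.exp (-(α * t))) atTop (𝓝 0) :=
    Real.tendsto_exp_atBot.comp (tendsto_neg_atTop_atBot.comp (tendsto_id.const_mul_atTop hα))
  have hlim := (hdecay.const_mul (f 0 - b / α)).const_add (b / α)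
  rw [mul_zero, add_zero] at hlim
  exact hlim.congr' (eventually_ge_atTop 0 |>.mono fun t ht => (hsol t ht).symm)

theorem exists_tendsto_sub_mul_of_coupled {v1 v2 α12 α21 : ℝ} (h12 : 0 < α12) (h21 : 0 < α21)
    {a1 a2 : ℝ → ℝ}
    (h1 : ∀ t : ℝ, 0 ≤ t → HasDerivAt a1 (v1 + α12 * (a2 t - a1 t)) t)
    (h2 : ∀ t : ℝ, 0 ≤ t → HasDerivAt a2 (v2 + α21 * (a1 t - a2 t)) t) :
    ∃ a10 : ℝ, Tendsto (fun t => a1 t - (α21 * v1 + α12 * v2) / (α12 + α21) * t)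
      atTop (𝓝 a10) := by
  set α := α12 + α21
  have hα : 0 < α := add_pos h12 h21
  have hgap : Tendsto (fun t => a1 t - a2 t) atTop (𝓝 ((v1 - v2) / α)) :=
    tendsto_of_hasDerivAt_eq_sub_mul hα fun t ht =>
      ((h1 t ht).sub (h2 t ht)).congr_deriv (by ring)
  have hmean (t : ℝ) (ht : 0 ≤ t) : α21 * a1 t + α12 * a2 t
      = α21 * a1 0 + α12 * a2 0 + (α21 * v1 + α12 * v2) * t :=
    eq_add_mul_of_hasDerivAt_const (f := fun t => α21 * a1 t + α12 * a2 t)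
      (fun t ht => (((h1 t ht).const_mul α21).add ((h2 t ht).const_mul α12)).congr_deriv
        (by ring)) ht
  refine ⟨_, ((hgap.const_mul α12).const_add (α21 * a1 0 + α12 * a2 0)).div_const α
    |>.congr' (eventually_ge_atTop 0 |>.mono fun t ht => ?_)⟩
  field_simp
  linear_combination -hmean t ht

/-- With `v = (α21 * v1 + α12 * v2)/(α12 + α21)`, there exist constants `a10`, `a20`
such that `a1 t - v * t → a10` and `a2 t - v * t → a20` as `t → ∞`. -/
theorem stmt_3 (v1 v2 α12 α21 : ℝ) (h12 : 0 < α12) (h21 : 0 < α21)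
    (a1 a2 : ℝ → ℝ)
    (h1 : ∀ t : ℝ, 0 ≤ t → HasDerivAt a1 (v1 + α12 * (a2 t - a1 t)) t)
    (h2 : ∀ t : ℝ, 0 ≤ t → HasDerivAt a2 (v2 + α21 * (a1 t - a2 t)) t) :
    ∃ a10 a20 : ℝ,
      Filter.Tendsto (fun t => a1 t - (α21 * v1 + α12 * v2) / (α12 + α21) * t)
        Filter.atTop (nhds a10) ∧
      Filter.Tendsto (fun t => a2 t - (α21 * v1 + α12 * v2) / (α12 + α21) * t)
        Filter.atTop (nhds a20) := by
  obtain ⟨a10, hlim1⟩ := exists_tendsto_sub_mul_of_coupled h12 h21 h1 h2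
  obtain ⟨a20, hlim2⟩ := exists_tendsto_sub_mul_of_coupled h21 h12 h2 h1
  rw [add_comm α21, add_comm (α12 * v2)] at hlim2
  exact ⟨a10, a20, hlim1, hlim2⟩
end

section
/- As t → ∞, d2(t) − d1(t) converges to ((v2 − v1)/α)² · (α21 − α12)/α. -/
/-!
Both `a2 - a1` and `d2 - d1` solve a linear equation `x' = g - α x` whose forcing term `g`
converges: for `a2 - a1` it is the constant `v2 - v1`, for `d2 - d1` it is
`(α21 - α12) (a2 - a1)²`, which then tends to `(α21 - α12) ((v2 - v1) / α)²`. Any such solution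
tends to `lim g / α`, because `e^{α t} (x - L / α)` has derivative `e^{α t} (g - L) = o(e^{α t})`.
-/

open Real Filter Topology

theorem abs_le_of_abs_deriv_le_mul_exp {φ φ' : ℝ → ℝ} {α C T : ℝ} (hα : α ≠ 0)
    (hφ : ∀ t ≥ T, HasDerivAt φ (φ' t) t) (hbound : ∀ t ≥ T, |φ' t| ≤ C * exp (α * t)) :
    ∀ t ≥ T, |φ t| ≤ |φ T| + C / α * (exp (α * t) - exp (α * T)) := by
  intro t ht
  have hB (s : ℝ) : HasDerivAt (fun s => |φ T| + C / α * (exp (α * s) - exp (α * T)))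
      (C * exp (α * s)) s := by
    refine ((((hasDerivAt_id s).const_mul α).exp.sub_const _).const_mul (C / α)).const_add _
      |>.congr_deriv ?_
    field_simp
    simp
  exact image_norm_le_of_norm_deriv_right_le_deriv_boundary
    (fun s hs => (hφ s hs.1).continuousAt.continuousWithinAt)
    (fun s hs => (hφ s hs.1).hasDerivWithinAt) (by simp) hB (fun s hs => hbound s hs.1) ⟨ht, le_rfl⟩

theorem tendsto_div_of_hasDerivAt_eq_sub_mul {f g : ℝ → ℝ} {α L : ℝ} (hα : 0 < α)
    (hf : ∀ᶠ t in atTop, HasDerivAt f (g t - α * f t) t) (hg : Tendsto g atTop (𝓝 L)) :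
    Tendsto f atTop (𝓝 (L / α)) := by
  rw [Metric.tendsto_nhds]
  intro ε hε
  obtain ⟨T, hT⟩ := eventually_atTop.1
    (hf.and (Metric.tendsto_nhds.1 hg (α * ε / 2) (by positivity)))
  set φ := fun t => exp (α * t) * (f t - L / α)
  have hφ : ∀ t ≥ T, HasDerivAt φ (exp (α * t) * (g t - L)) t := by
    intro t ht
    refine ((hasDerivAt_id t).const_mul α).exp.mul ((hT t ht).1.sub_const (L / α))
      |>.congr_deriv ?_
    field_simp
    simp
  have hbound : ∀ t ≥ T, |exp (α * t) * (g t - L)| ≤ α * ε / 2 * exp (α * t) := by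
    intro t ht
    rw [abs_mul, abs_exp, mul_comm]
    exact mul_le_mul_of_nonneg_right (hT t ht).2.le (exp_pos _).le
  have hexp : Tendsto (fun t => exp (α * t)) atTop atTop :=
    tendsto_exp_atTop.comp (tendsto_id.const_mul_atTop hα)
  filter_upwards [eventually_ge_atTop T, hexp.eventually_gt_atTop (2 * |φ T| / ε)]
    with t ht hlarge
  have hφt := abs_le_of_abs_deriv_le_mul_exp hα.ne' hφ hbound t ht
  have hφt_eq : |φ t| = exp (α * t) * dist (f t) (L / α) := by
    simp [φ, abs_mul, Real.dist_eq]
  have hcoef : α * ε / 2 / α = ε / 2 := by field_simp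
  rw [div_lt_iff₀ hε] at hlarge
  nlinarith [exp_pos (α * t), exp_pos (α * T)]

/-- As `t → ∞`, `d2 t - d1 t` converges to
`((v2 - v1)/(α12 + α21))^2 * (α21 - α12)/(α12 + α21)`. -/
theorem stmt_5 (v1 v2 α12 α21 : ℝ) (h12 : 0 < α12) (h21 : 0 < α21)
    (a1 a2 d1 d2 : ℝ → ℝ)
    (h1 : ∀ t : ℝ, 0 ≤ t → HasDerivAt a1 (v1 + α12 * (a2 t - a1 t)) t)
    (h2 : ∀ t : ℝ, 0 ≤ t → HasDerivAt a2 (v2 + α21 * (a1 t - a2 t)) t)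
    (h3 : ∀ t : ℝ, 0 ≤ t →
      HasDerivAt d1 (α12 * (d2 t - d1 t) + α12 * (a2 t - a1 t) ^ 2) t)
    (h4 : ∀ t : ℝ, 0 ≤ t →
      HasDerivAt d2 (α21 * (d1 t - d2 t) + α21 * (a1 t - a2 t) ^ 2) t) :
    Filter.Tendsto (fun t => d2 t - d1 t) Filter.atTop
      (nhds (((v2 - v1) / (α12 + α21)) ^ 2 * ((α21 - α12) / (α12 + α21)))) := by
  have hα : 0 < α12 + α21 := add_pos h12 h21
  have ha : Tendsto (fun t => a2 t - a1 t) atTop (𝓝 ((v2 - v1) / (α12 + α21))) :=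
    tendsto_div_of_hasDerivAt_eq_sub_mul hα (g := fun _ => v2 - v1)
      ((eventually_ge_atTop 0).mono fun t ht =>
        ((h2 t ht).sub (h1 t ht)).congr_deriv (by ring))
      tendsto_const_nhds
  have hd := tendsto_div_of_hasDerivAt_eq_sub_mul hα
    (f := fun t => d2 t - d1 t) (g := fun t => (α21 - α12) * (a2 t - a1 t) ^ 2)
    ((eventually_ge_atTop 0).mono fun t ht =>
      ((h4 t ht).sub (h3 t ht)).congr_deriv (by ring))
    ((ha.pow 2).const_mul _)
  convert hd using 2
  ring
end

section
/- As t → ∞, the derivative of t ↦ α21·d1(t) + α12·d2(t) converges to 2·α12·α21·((v2 − v1)/α)². -/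
open Filter Topology Real

section LinearRelaxation

variable {f : ℝ → ℝ} {b k : ℝ}

/-- Multiplying the deviation from the equilibrium `b / k` by `e^{kt}` gives a function with zero
derivative. -/
theorem sub_div_mul_exp_eq_of_hasDerivAt (hk : k ≠ 0)
    (hf : ∀ t, 0 ≤ t → HasDerivAt f (b - k * f t) t) {t : ℝ} (ht : 0 ≤ t) :
    (f t - b / k) * exp (k * t) = f 0 - b / k := by
  set g : ℝ → ℝ := fun s => (f s - b / k) * exp (k * s)
  have hg : ∀ s, 0 ≤ s → HasDerivAt g 0 s := by
    intro s hs
    have hexp : HasDerivAt (fun s => exp (k * s)) (exp (k * s) * k) s := by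
      simpa using ((hasDerivAt_id s).const_mul k).exp
    refine (((hf s hs).sub_const (b / k)).mul hexp).congr_deriv ?_
    field_simp
    ring
  have := constant_of_has_deriv_right_zero (f := g) (a := 0) (b := t)
    (fun x hx => (hg x hx.1).continuousAt.continuousWithinAt)
    (fun x hx => (hg x hx.1).hasDerivWithinAt) t ⟨ht, le_rfl⟩
  simpa [g] using this

theorem tendsto_div_of_hasDerivAt_sub_mul (hk : 0 < k)
    (hf : ∀ t, 0 ≤ t → HasDerivAt f (b - k * f t) t) :
    Tendsto f atTop (𝓝 (b / k)) := by
  have hdecay : Tendsto (fun t => b / k + (f 0 - b / k) * exp (-(k * t))) atTop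
      (𝓝 (b / k + (f 0 - b / k) * 0)) :=
    tendsto_const_nhds.add <| tendsto_const_nhds.mul <|
      tendsto_exp_neg_atTop_nhds_zero.comp (tendsto_id.const_mul_atTop hk)
  rw [mul_zero, add_zero] at hdecay
  refine hdecay.congr' ?_
  filter_upwards [eventually_ge_atTop 0] with t ht
  rw [← sub_div_mul_exp_eq_of_hasDerivAt hk.ne' hf ht, exp_neg, mul_assoc,
    mul_inv_cancel₀ (exp_ne_zero _)]
  ring

end LinearRelaxation

theorem deriv_weighted_sum_eq (α12 α21 : ℝ) {d1 d2 x : ℝ → ℝ} {t : ℝ}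
    (h3 : HasDerivAt d1 (α12 * (d2 t - d1 t) + α12 * x t ^ 2) t)
    (h4 : HasDerivAt d2 (α21 * (d1 t - d2 t) + α21 * (-x t) ^ 2) t) :
    deriv (fun s => α21 * d1 s + α12 * d2 s) t = 2 * α12 * α21 * x t ^ 2 := by
  exact ((h3.const_mul α21).add (h4.const_mul α12)).deriv.trans (by ring)

/-- As `t → ∞`, the derivative of `t ↦ α21 * d1 t + α12 * d2 t` converges to
`2 * α12 * α21 * ((v2 - v1)/(α12 + α21))^2`. -/
theorem stmt_6 (v1 v2 α12 α21 : ℝ) (h12 : 0 < α12) (h21 : 0 < α21)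
    (a1 a2 d1 d2 : ℝ → ℝ)
    (h1 : ∀ t : ℝ, 0 ≤ t → HasDerivAt a1 (v1 + α12 * (a2 t - a1 t)) t)
    (h2 : ∀ t : ℝ, 0 ≤ t → HasDerivAt a2 (v2 + α21 * (a1 t - a2 t)) t)
    (h3 : ∀ t : ℝ, 0 ≤ t →
      HasDerivAt d1 (α12 * (d2 t - d1 t) + α12 * (a2 t - a1 t) ^ 2) t)
    (h4 : ∀ t : ℝ, 0 ≤ t →
      HasDerivAt d2 (α21 * (d1 t - d2 t) + α21 * (a1 t - a2 t) ^ 2) t) :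
    Filter.Tendsto (deriv (fun s => α21 * d1 s + α12 * d2 s)) Filter.atTop
      (nhds (2 * α12 * α21 * ((v2 - v1) / (α12 + α21)) ^ 2)) := by
  have hgap : Tendsto (a2 - a1) atTop (𝓝 ((v2 - v1) / (α12 + α21))) := by
    refine tendsto_div_of_hasDerivAt_sub_mul (by positivity) fun t ht => ?_
    exact ((h2 t ht).sub (h1 t ht)).congr_deriv (by simp only [Pi.sub_apply]; ring)
  refine (tendsto_const_nhds.mul (hgap.pow 2)).congr' ?_
  filter_upwards [eventually_ge_atTop 0] with t ht
  refine (deriv_weighted_sum_eq α12 α21 (x := a2 - a1) (h3 t ht) ?_).symm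
  simpa only [Pi.sub_apply, neg_sub] using h4 t ht
end

section
/- Set d = 2·α12·α21·(v2 − v1)²/α³. There exist real constants d10 and d20 such that d1(t) − d·t → d10 and d2(t) − d·t → d20 as t → ∞ (i.e. d_i(t) = d·t + d_{i0} + o(1)); in particular d1(t)/t → d and d2(t)/t → d. -/
/-!
The gap `b = a₂ - a₁` solves `b' = (v₂ - v₁) - α b`, so `b = c + K e^{-αt}` with
`c = (v₂ - v₁) / α`. The weighted sum `s = α₂₁ d₁ + α₁₂ d₂` has `s' = 2 α₁₂ α₂₁ b²`, whose
excess over `2 α₁₂ α₂₁ c²` is integrable, so `s - 2 α₁₂ α₂₁ c² t` converges. The difference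
`e = d₂ - d₁` solves `e' = -α e + (α₂₁ - α₁₂) b²` and relaxes to `(α₂₁ - α₁₂) c² / α`.
Then `d₁ = (s - α₁₂ e) / α` and `d₂ = (s + α₂₁ e) / α`.
-/

open Real Filter Topology

section LinearODE

variable {f g p : ℝ → ℝ} {α : ℝ}

theorem sub_eq_sub_of_hasDerivAt_eq {f' : ℝ → ℝ}
    (hf : ∀ t, 0 ≤ t → HasDerivAt f (f' t) t) (hg : ∀ t, 0 ≤ t → HasDerivAt g (f' t) t)
    {t : ℝ} (ht : 0 ≤ t) : f t - g t = f 0 - g 0 := by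
  have hd : ∀ x, 0 ≤ x → HasDerivAt (fun x => f x - g x) 0 x := fun x hx => by
    simpa using (hf x hx).fun_sub (hg x hx)
  exact constant_of_has_deriv_right_zero (fun x hx => (hd x hx.1).continuousAt.continuousWithinAt)
    (fun x hx => (hd x hx.1).hasDerivWithinAt) t ⟨ht, le_rfl⟩

theorem hasDerivAt_exp_neg_mul (α t : ℝ) :
    HasDerivAt (fun t => exp (-(α * t))) (-α * exp (-(α * t))) t := by
  simpa [mul_comm] using (((hasDerivAt_id t).const_mul α).neg).exp

theorem tendsto_exp_neg_mul_atTop (hα : 0 < α) :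
    Tendsto (fun t => exp (-(α * t))) atTop (𝓝 0) :=
  tendsto_exp_neg_atTop_nhds_zero.comp (tendsto_id.const_mul_atTop hα)

theorem tendsto_mul_exp_neg_mul_atTop (hα : 0 < α) :
    Tendsto (fun t => t * exp (-(α * t))) atTop (𝓝 0) := by
  have h := ((tendsto_pow_mul_exp_neg_atTop_nhds_zero 1).comp
    (tendsto_id.const_mul_atTop hα)).const_mul α⁻¹
  rw [mul_zero] at h
  refine h.congr fun t => ?_
  simp only [Function.comp, id, pow_one]
  field_simp

theorem sub_eq_mul_exp_of_hasDerivAt_linear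
    (hf : ∀ t, 0 ≤ t → HasDerivAt f (-α * f t + g t) t)
    (hp : ∀ t, 0 ≤ t → HasDerivAt p (-α * p t + g t) t) {t : ℝ} (ht : 0 ≤ t) :
    f t - p t = (f 0 - p 0) * exp (-(α * t)) := by
  have hd : ∀ x, 0 ≤ x → HasDerivAt (fun x => (f x - p x) * exp (α * x)) 0 x := fun x hx => by
    refine ((hf x hx).fun_sub (hp x hx)).fun_mul
      (by simpa using (hasDerivAt_exp_neg_mul (-α) x)) |>.congr_deriv ?_
    ring
  have h := sub_eq_sub_of_hasDerivAt_eq hd (fun x _ => hasDerivAt_const x (0 : ℝ)) ht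
  simp only [mul_zero, exp_zero, mul_one, sub_zero] at h
  rw [← h, mul_assoc, ← exp_add]
  simp

theorem tendsto_sub_of_hasDerivAt_linear (hα : 0 < α)
    (hf : ∀ t, 0 ≤ t → HasDerivAt f (-α * f t + g t) t)
    (hp : ∀ t, 0 ≤ t → HasDerivAt p (-α * p t + g t) t) :
    Tendsto (fun t => f t - p t) atTop (𝓝 0) := by
  have h := (tendsto_exp_neg_mul_atTop hα).const_mul (f 0 - p 0)
  rw [mul_zero] at h
  exact h.congr' <| (eventually_ge_atTop 0).mono fun t ht =>
    (sub_eq_mul_exp_of_hasDerivAt_linear hf hp ht).symm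

theorem eq_add_mul_exp_of_hasDerivAt {u : ℝ → ℝ} {k : ℝ} (hα : α ≠ 0)
    (hu : ∀ t, 0 ≤ t → HasDerivAt u (k - α * u t) t) {t : ℝ} (ht : 0 ≤ t) :
    u t = k / α + (u 0 - k / α) * exp (-(α * t)) := by
  have h := sub_eq_mul_exp_of_hasDerivAt_linear (α := α) (g := fun _ => k) (p := fun _ => k / α)
    (fun x hx => (hu x hx).congr_deriv (by ring))
    (fun x _ => (hasDerivAt_const x (k / α)).congr_deriv (by field_simp; ring)) ht
  linarith

end LinearODE

section QuadraticForcing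

variable {b : ℝ → ℝ} {α c K : ℝ}

theorem exists_tendsto_sub_mul_of_hasDerivAt_sq {s : ℝ → ℝ} {C : ℝ} (hα : 0 < α)
    (hb : ∀ t, 0 ≤ t → b t = c + K * exp (-(α * t)))
    (hs : ∀ t, 0 ≤ t → HasDerivAt s (C * b t ^ 2) t) :
    ∃ L, Tendsto (fun t => s t - C * c ^ 2 * t) atTop (𝓝 L) := by
  set P : ℝ → ℝ := fun t =>
    C * (c ^ 2 * t - 2 * c * K / α * exp (-(α * t)) - K ^ 2 / (2 * α) * exp (-(α * t)) ^ 2)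
  have hP : ∀ t, 0 ≤ t → HasDerivAt P (C * b t ^ 2) t := fun t ht => by
    have hE := hasDerivAt_exp_neg_mul α t
    refine ((((hasDerivAt_id t).const_mul (c ^ 2)).fun_sub (hE.const_mul (2 * c * K / α))).fun_sub
      ((hE.fun_pow 2).const_mul (K ^ 2 / (2 * α)))).const_mul C |>.congr_deriv ?_
    rw [hb t ht]
    field_simp
    ring
  have hE := tendsto_exp_neg_mul_atTop hα
  have h := ((hE.const_mul (2 * c * K / α)).add ((hE.pow 2).const_mul (K ^ 2 / (2 * α)))).const_mul C
    |>.const_sub (s 0 - P 0)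
  refine ⟨s 0 - P 0, ?_⟩
  simp only [mul_zero, add_zero, zero_pow two_ne_zero, sub_zero] at h
  refine h.congr' <| (eventually_ge_atTop 0).mono fun t ht => ?_
  have := sub_eq_sub_of_hasDerivAt_eq hs hP ht
  simp only [P] at this ⊢
  linear_combination -this

theorem tendsto_of_hasDerivAt_linear_sq {e : ℝ → ℝ} {β : ℝ} (hα : 0 < α)
    (hb : ∀ t, 0 ≤ t → b t = c + K * exp (-(α * t)))
    (he : ∀ t, 0 ≤ t → HasDerivAt e (-α * e t + β * b t ^ 2) t) :
    Tendsto e atTop (𝓝 (β * c ^ 2 / α)) := by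
  set p : ℝ → ℝ := fun t =>
    β * (c ^ 2 / α + 2 * c * K * (t * exp (-(α * t))) - K ^ 2 / α * exp (-(α * t)) ^ 2)
  have hp : ∀ t, 0 ≤ t → HasDerivAt p (-α * p t + β * b t ^ 2) t := fun t ht => by
    have hE := hasDerivAt_exp_neg_mul α t
    refine ((((hasDerivAt_id t).fun_mul hE).const_mul (2 * c * K)).const_add (c ^ 2 / α) |>.fun_sub
      ((hE.fun_pow 2).const_mul (K ^ 2 / α))).const_mul β |>.congr_deriv ?_
    rw [hb t ht]
    simp only [p, id]
    field_simp
    ring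
  have hE := tendsto_exp_neg_mul_atTop hα
  have hplim : Tendsto p atTop (𝓝 (β * c ^ 2 / α)) := by
    have h := ((((tendsto_mul_exp_neg_mul_atTop hα).const_mul (2 * c * K)).const_add (c ^ 2 / α)).sub
      ((hE.pow 2).const_mul (K ^ 2 / α))).const_mul β
    simp only [mul_zero, add_zero, zero_pow two_ne_zero, sub_zero] at h
    convert h using 2
    ring
  simpa using (tendsto_sub_of_hasDerivAt_linear hα he hp).add hplim

end QuadraticForcing

theorem tendsto_div_of_tendsto_sub_mul {f : ℝ → ℝ} {D L : ℝ}
    (h : Tendsto (fun t => f t - D * t) atTop (𝓝 L)) :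
    Tendsto (fun t => f t / t) atTop (𝓝 D) := by
  have h' := (h.div_atTop tendsto_id).add_const D
  rw [zero_add] at h'
  refine h'.congr' <| (eventually_gt_atTop 0).mono fun t ht => ?_
  simp only [id]
  field_simp
  ring

/-- With `d = 2 * α12 * α21 * (v2 - v1)^2 / (α12 + α21)^3`, there exist constants
`d10`, `d20` such that `d1 t - d * t → d10` and `d2 t - d * t → d20` as `t → ∞`;
in particular `d1 t / t → d` and `d2 t / t → d`. -/
theorem stmt_7 (v1 v2 α12 α21 : ℝ) (h12 : 0 < α12) (h21 : 0 < α21)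
    (a1 a2 d1 d2 : ℝ → ℝ)
    (h1 : ∀ t : ℝ, 0 ≤ t → HasDerivAt a1 (v1 + α12 * (a2 t - a1 t)) t)
    (h2 : ∀ t : ℝ, 0 ≤ t → HasDerivAt a2 (v2 + α21 * (a1 t - a2 t)) t)
    (h3 : ∀ t : ℝ, 0 ≤ t →
      HasDerivAt d1 (α12 * (d2 t - d1 t) + α12 * (a2 t - a1 t) ^ 2) t)
    (h4 : ∀ t : ℝ, 0 ≤ t →
      HasDerivAt d2 (α21 * (d1 t - d2 t) + α21 * (a1 t - a2 t) ^ 2) t) :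
    (∃ d10 d20 : ℝ,
      Filter.Tendsto
        (fun t => d1 t - 2 * α12 * α21 * (v2 - v1) ^ 2 / (α12 + α21) ^ 3 * t)
        Filter.atTop (nhds d10) ∧
      Filter.Tendsto
        (fun t => d2 t - 2 * α12 * α21 * (v2 - v1) ^ 2 / (α12 + α21) ^ 3 * t)
        Filter.atTop (nhds d20)) ∧
    Filter.Tendsto (fun t => d1 t / t) Filter.atTop
      (nhds (2 * α12 * α21 * (v2 - v1) ^ 2 / (α12 + α21) ^ 3)) ∧
    Filter.Tendsto (fun t => d2 t / t) Filter.atTop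
      (nhds (2 * α12 * α21 * (v2 - v1) ^ 2 / (α12 + α21) ^ 3)) := by
  set α := α12 + α21
  have hα : 0 < α := by positivity
  set c := (v2 - v1) / α
  have hgap : ∀ t, 0 ≤ t → a2 t - a1 t = c + (a2 0 - a1 0 - c) * exp (-(α * t)) :=
    fun t ht => eq_add_mul_exp_of_hasDerivAt hα.ne'
      (fun x hx => (h2 x hx).fun_sub (h1 x hx) |>.congr_deriv (by ring)) ht
  obtain ⟨L, hsum⟩ := exists_tendsto_sub_mul_of_hasDerivAt_sq (C := 2 * α12 * α21) hα hgap
    fun t ht => ((h3 t ht).const_mul α21).fun_add ((h4 t ht).const_mul α12) |>.congr_deriv (by ring)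
  have hdiff := tendsto_of_hasDerivAt_linear_sq (β := α21 - α12) hα hgap
    fun t ht => (h4 t ht).fun_sub (h3 t ht) |>.congr_deriv (by ring)
  have hD : 2 * α12 * α21 * (v2 - v1) ^ 2 / α ^ 3 = 2 * α12 * α21 * c ^ 2 / α := by
    simp only [c, div_pow]
    field_simp
  rw [hD]
  have hd1 := ((hsum.sub (hdiff.const_mul α12)).div_const α).congr
    (f₂ := fun t => d1 t - 2 * α12 * α21 * c ^ 2 / α * t) fun t => by field_simp; ring
  have hd2 := ((hsum.add (hdiff.const_mul α21)).div_const α).congr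
    (f₂ := fun t => d2 t - 2 * α12 * α21 * c ^ 2 / α * t) fun t => by field_simp; ring
  exact ⟨⟨_, _, hd1, hd2⟩, tendsto_div_of_tendsto_sub_mul hd1, tendsto_div_of_tendsto_sub_mul hd2⟩
end

section
/- If (m1, m2) and (n1, n2) are two locally uniformly compactly supported classical solutions of the synchronization system with the same initial data, i.e. m1(0,x) = n1(0,x) and m2(0,x) = n2(0,x) for all x ∈ ℝ, then m1 = n1 and m2 = n2 on [0,∞) × ℝ. -/
/-!
The differences `d₁ = m₁ - n₁`, `d₂ = m₂ - n₂` solve the same linear system with zero initial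
data. Along a characteristic `τ ↦ (τ, y + v τ)` each `dᵢ` changes at rate `α (dⱼ - dᵢ)`, so
`|dᵢ(s, z)|` is at most the integral of `|α| (|dⱼ| + |dᵢ|)` over the characteristic. Compact
support makes the `dᵢ` bounded by some `A` on `[0, T] × ℝ`, and iterating the integral estimate
gives `|dᵢ(t, x)| ≤ A (C t)ⁿ / n!` for every `n`, with `C = 2 (|α₁₂| + |α₂₁|)`.
-/

open Set Function Filter Topology

noncomputable def transportDeriv (v : ℝ) (u : ℝ → ℝ → ℝ) (t x : ℝ) : ℝ :=
  deriv (fun s => u s x) t + v * deriv (u t) x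

section Transport

variable {u w F : ℝ → ℝ → ℝ} {v : ℝ}

lemma differentiableAt_uncurry_of_pos (hu : DifferentiableOn ℝ (uncurry u) (Ici 0 ×ˢ univ))
    {t : ℝ} (ht : 0 < t) (x : ℝ) : DifferentiableAt ℝ (uncurry u) (t, x) :=
  hu.differentiableAt (prod_mem_nhds (Ici_mem_nhds ht) univ_mem)

lemma hasDerivAt_transportDeriv {t y : ℝ}
    (hu : DifferentiableAt ℝ (uncurry u) (t, y + v * t)) :
    HasDerivAt (fun τ => u τ (y + v * τ)) (transportDeriv v u t (y + v * t)) t := by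
  set c := y + v * t
  obtain ⟨L, hL⟩ := hu
  have hdt : deriv (fun s => u s c) t = L (1, 0) :=
    (HasFDerivAt.comp_hasDerivAt (l := uncurry u) t hL
      ((hasDerivAt_id t).prodMk (hasDerivAt_const t c))).deriv
  have hdx : deriv (u t) c = L (0, 1) :=
    (HasFDerivAt.comp_hasDerivAt (l := uncurry u) c hL
      ((hasDerivAt_const c t).prodMk (hasDerivAt_id c))).deriv
  have hchar : HasDerivAt (fun τ : ℝ => (τ, y + v * τ)) ((1 : ℝ), v) t :=
    (hasDerivAt_id t).prodMk (by simpa using ((hasDerivAt_id t).const_mul v).const_add y)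
  have hsplit : ((1 : ℝ), v) = (1, 0) + v • ((0 : ℝ), (1 : ℝ)) := by simp
  rw [transportDeriv, hdt, hdx, ← smul_eq_mul, ← L.map_smul, ← L.map_add, ← hsplit]
  exact hL.comp_hasDerivAt t hchar

lemma transportDeriv_sub (hu : DifferentiableOn ℝ (uncurry u) (Ici 0 ×ˢ univ))
    (hw : DifferentiableOn ℝ (uncurry w) (Ici 0 ×ˢ univ)) {t : ℝ} (ht : 0 < t) (x : ℝ) :
    transportDeriv v (u - w) t x = transportDeriv v u t x - transportDeriv v w t x := by
  have partial_t (f : ℝ → ℝ → ℝ) (hf : DifferentiableOn ℝ (uncurry f) (Ici 0 ×ˢ univ)) :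
      DifferentiableAt ℝ (fun s => f s x) t :=
    DifferentiableAt.comp (g := uncurry f) (f := fun s => (s, x)) t
      (differentiableAt_uncurry_of_pos hf ht x)
      (differentiableAt_id.prodMk (differentiableAt_const x))
  have partial_x (f : ℝ → ℝ → ℝ) (hf : DifferentiableOn ℝ (uncurry f) (Ici 0 ×ˢ univ)) :
      DifferentiableAt ℝ (f t) x :=
    DifferentiableAt.comp (g := uncurry f) (f := fun y => (t, y)) x
      (differentiableAt_uncurry_of_pos hf ht x)
      ((differentiableAt_const t).prodMk differentiableAt_id)
  simp only [transportDeriv, Pi.sub_apply]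
  rw [deriv_fun_sub (partial_t u hu) (partial_t w hw),
    deriv_sub (partial_x u hu) (partial_x w hw)]
  ring

lemma transportDeriv_sub_of_coupled {α : ℝ} {u' w' : ℝ → ℝ → ℝ}
    (hu : DifferentiableOn ℝ (uncurry u) (Ici 0 ×ˢ univ))
    (hw : DifferentiableOn ℝ (uncurry w) (Ici 0 ×ˢ univ))
    (hpdeu : ∀ t, 0 < t → ∀ x, transportDeriv v u t x = α * (u' t x - u t x))
    (hpdew : ∀ t, 0 < t → ∀ x, transportDeriv v w t x = α * (w' t x - w t x)) :
    ∀ t, 0 < t → ∀ x, transportDeriv v (u - w) t x = α * ((u' - w') t x - (u - w) t x) := by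
  intro t ht x
  rw [transportDeriv_sub hu hw ht, hpdeu t ht, hpdew t ht, Pi.sub_apply, Pi.sub_apply,
    Pi.sub_apply, Pi.sub_apply]
  ring

lemma abs_le_integral_of_transport {g : ℝ → ℝ} {s z : ℝ}
    (hu : DifferentiableOn ℝ (uncurry u) (Ici 0 ×ˢ univ))
    (hF : ContinuousOn (uncurry F) (Ici 0 ×ˢ univ))
    (hpde : ∀ t, 0 < t → ∀ x, transportDeriv v u t x = F t x) (h0 : ∀ x, u 0 x = 0)
    (hs : 0 ≤ s) (hg : IntervalIntegrable g MeasureTheory.volume 0 s)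
    (hFg : ∀ τ ∈ Icc 0 s, ∀ x, |F τ x| ≤ g τ) :
    |u s z| ≤ ∫ τ in (0 : ℝ)..s, g τ := by
  -- the characteristic through `(s, z)`
  set y := z - v * s
  have hcurve : MapsTo (fun τ : ℝ => (τ, y + v * τ)) (Icc 0 s) (Ici 0 ×ˢ univ) :=
    fun τ hτ => ⟨hτ.1, trivial⟩
  have hcont : Continuous (fun τ : ℝ => (τ, y + v * τ)) := by fun_prop
  have hGc : ContinuousOn (fun τ => F τ (y + v * τ)) (Icc 0 s) :=
    hF.comp hcont.continuousOn hcurve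
  have hGint : IntervalIntegrable (fun τ => F τ (y + v * τ)) MeasureTheory.volume 0 s :=
    (hGc.mono (uIcc_of_le hs).subset).intervalIntegrable
  have hduhamel : ∫ τ in (0 : ℝ)..s, F τ (y + v * τ) = u s z - u 0 y := by
    have hend : y + v * s = z := by ring
    have := intervalIntegral.integral_eq_sub_of_hasDeriv_right_of_le hs
      (hu.continuousOn.comp hcont.continuousOn hcurve)
      (fun τ hτ => (hpde τ hτ.1 _ ▸ hasDerivAt_transportDeriv
        (differentiableAt_uncurry_of_pos hu hτ.1 _)).hasDerivWithinAt) hGint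
    simpa [hend] using this
  calc |u s z| = ‖∫ τ in (0 : ℝ)..s, F τ (y + v * τ)‖ := by
        rw [hduhamel, h0, sub_zero, Real.norm_eq_abs]
    _ ≤ ∫ τ in (0 : ℝ)..s, ‖F τ (y + v * τ)‖ :=
        intervalIntegral.norm_integral_le_integral_norm hs
    _ ≤ ∫ τ in (0 : ℝ)..s, g τ :=
        intervalIntegral.integral_mono_on hs hGint.norm hg fun τ hτ => hFg τ hτ _

open Nat in
lemma abs_le_pow_succ_div_factorial_of_transport {A C s z : ℝ} {n : ℕ}
    (hu : DifferentiableOn ℝ (uncurry u) (Ici 0 ×ˢ univ))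
    (hF : ContinuousOn (uncurry F) (Ici 0 ×ˢ univ))
    (hpde : ∀ t, 0 < t → ∀ x, transportDeriv v u t x = F t x) (h0 : ∀ x, u 0 x = 0)
    (hs : 0 ≤ s) (hFb : ∀ τ ∈ Icc 0 s, ∀ x, |F τ x| ≤ C * (A * (C * τ) ^ n / n !)) :
    |u s z| ≤ A * (C * s) ^ (n + 1) / (n + 1)! := by
  refine (abs_le_integral_of_transport hu hF hpde h0 hs
    (Continuous.intervalIntegrable (by fun_prop) _ _) hFb).trans_eq ?_
  have hpoly :
      (fun τ => C * (A * (C * τ) ^ n / n !)) = fun τ => (C ^ (n + 1) * A / n !) * τ ^ n := by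
    ext τ; ring
  rw [hpoly, intervalIntegral.integral_const_mul, integral_pow, factorial_succ]
  push_cast
  field_simp
  ring

end Transport

section Synchronization

variable {v α : ℝ} {u w : ℝ → ℝ → ℝ}

open Nat in
lemma abs_le_pow_succ_div_factorial_of_coupled {A C T : ℝ} {n : ℕ}
    (hu : DifferentiableOn ℝ (uncurry u) (Ici 0 ×ˢ univ))
    (hw : ContinuousOn (uncurry w) (Ici 0 ×ˢ univ))
    (hpde : ∀ t, 0 < t → ∀ x, transportDeriv v u t x = α * (w t x - u t x))
    (h0 : ∀ x, u 0 x = 0) (hαC : 2 * |α| ≤ C)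
    (hn : ∀ t ∈ Icc 0 T, ∀ x,
      |u t x| ≤ A * (C * t) ^ n / n ! ∧ |w t x| ≤ A * (C * t) ^ n / n !) :
    ∀ t ∈ Icc 0 T, ∀ x, |u t x| ≤ A * (C * t) ^ (n + 1) / (n + 1)! := by
  intro t ht z
  refine abs_le_pow_succ_div_factorial_of_transport (F := fun τ x => α * (w τ x - u τ x)) hu
    (continuousOn_const.mul (hw.sub hu.continuousOn)) hpde h0 ht.1 fun τ hτ x => ?_
  obtain ⟨hux, hwx⟩ := hn τ ⟨hτ.1, hτ.2.trans ht.2⟩ x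
  have hB : 0 ≤ A * (C * τ) ^ n / n ! := (abs_nonneg _).trans hux
  calc |α * (w τ x - u τ x)| ≤ |α| * (|w τ x| + |u τ x|) := by
        rw [abs_mul]; gcongr; exact abs_sub _ _
    _ ≤ |α| * (A * (C * τ) ^ n / n ! + A * (C * τ) ^ n / n !) := by gcongr
    _ = 2 * |α| * (A * (C * τ) ^ n / n !) := by ring
    _ ≤ C * (A * (C * τ) ^ n / n !) := by gcongr


variable {v1 v2 α12 α21 : ℝ} {d1 d2 : ℝ → ℝ → ℝ}

open Nat in
lemma sync_abs_le_pow_div_factorial (hd1 : DifferentiableOn ℝ (uncurry d1) (Ici 0 ×ˢ univ))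
    (hd2 : DifferentiableOn ℝ (uncurry d2) (Ici 0 ×ˢ univ))
    (hpde1 : ∀ t, 0 < t → ∀ x, transportDeriv v1 d1 t x = α12 * (d2 t x - d1 t x))
    (hpde2 : ∀ t, 0 < t → ∀ x, transportDeriv v2 d2 t x = α21 * (d1 t x - d2 t x))
    (h01 : ∀ x, d1 0 x = 0) (h02 : ∀ x, d2 0 x = 0) {A T : ℝ}
    (hA : ∀ t ∈ Icc 0 T, ∀ x, |d1 t x| ≤ A ∧ |d2 t x| ≤ A) (n : ℕ) :
    ∀ t ∈ Icc 0 T, ∀ x, |d1 t x| ≤ A * (2 * (|α12| + |α21|) * t) ^ n / n ! ∧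
      |d2 t x| ≤ A * (2 * (|α12| + |α21|) * t) ^ n / n ! := by
  induction n with
  | zero => simpa using hA
  | succ n ih =>
    intro t ht x
    exact ⟨abs_le_pow_succ_div_factorial_of_coupled hd1 hd2.continuousOn hpde1 h01
        (by linarith [abs_nonneg α21]) ih t ht x,
      abs_le_pow_succ_div_factorial_of_coupled hd2 hd1.continuousOn hpde2 h02
        (by linarith [abs_nonneg α12]) (fun t ht x => (ih t ht x).symm) t ht x⟩

lemma sync_eq_zero_of_bounded (hd1 : DifferentiableOn ℝ (uncurry d1) (Ici 0 ×ˢ univ))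
    (hd2 : DifferentiableOn ℝ (uncurry d2) (Ici 0 ×ˢ univ))
    (hpde1 : ∀ t, 0 < t → ∀ x, transportDeriv v1 d1 t x = α12 * (d2 t x - d1 t x))
    (hpde2 : ∀ t, 0 < t → ∀ x, transportDeriv v2 d2 t x = α21 * (d1 t x - d2 t x))
    (h01 : ∀ x, d1 0 x = 0) (h02 : ∀ x, d2 0 x = 0) {A T : ℝ}
    (hA : ∀ t ∈ Icc 0 T, ∀ x, |d1 t x| ≤ A ∧ |d2 t x| ≤ A) :
    ∀ t ∈ Icc 0 T, ∀ x, d1 t x = 0 ∧ d2 t x = 0 := by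
  intro t ht x
  have hbound := fun n => sync_abs_le_pow_div_factorial hd1 hd2 hpde1 hpde2 h01 h02 hA n t ht x
  have hlim :
      Tendsto (fun n : ℕ => A * (2 * (|α12| + |α21|) * t) ^ n / n.factorial) atTop (𝓝 0) := by
    simpa [mul_div_assoc] using
      (FloorSemiring.tendsto_pow_div_factorial_atTop (2 * (|α12| + |α21|) * t)).const_mul A
  exact ⟨abs_nonpos_iff.mp (ge_of_tendsto' hlim fun n => (hbound n).1),
    abs_nonpos_iff.mp (ge_of_tendsto' hlim fun n => (hbound n).2)⟩

end Synchronization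

lemma exists_abs_le_of_eq_zero_of_le_abs {u : ℝ → ℝ → ℝ}
    (hu : ContinuousOn (uncurry u) (Ici 0 ×ˢ univ)) {T R : ℝ}
    (hR : ∀ t x, 0 ≤ t → t ≤ T → R ≤ |x| → u t x = 0) :
    ∃ A, ∀ t ∈ Icc 0 T, ∀ x, |u t x| ≤ A := by
  obtain ⟨A, hA⟩ :=
    (isCompact_Icc.prod (isCompact_Icc (a := -R) (b := R))).exists_bound_of_continuousOn
      (hu.mono (prod_mono Icc_subset_Ici_self (subset_univ _)))
  refine ⟨max A 0, fun t ht x => ?_⟩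
  rcases le_total |x| R with hx | hx
  · exact (hA (t, x) ⟨ht, abs_le.mp hx⟩).trans (le_max_left _ _)
  · simp [hR t x ht.1 ht.2 hx]

theorem stmt_11_general (v1 v2 α12 α21 : ℝ)
    (m1 m2 n1 n2 : ℝ → ℝ → ℝ)
    (hm1 : ContDiffOn ℝ 1 (fun p : ℝ × ℝ => m1 p.1 p.2) (Set.Ici 0 ×ˢ Set.univ))
    (hm2 : ContDiffOn ℝ 1 (fun p : ℝ × ℝ => m2 p.1 p.2) (Set.Ici 0 ×ˢ Set.univ))
    (hn1 : ContDiffOn ℝ 1 (fun p : ℝ × ℝ => n1 p.1 p.2) (Set.Ici 0 ×ˢ Set.univ))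
    (hn2 : ContDiffOn ℝ 1 (fun p : ℝ × ℝ => n2 p.1 p.2) (Set.Ici 0 ×ˢ Set.univ))
    (hpdem1 : ∀ t : ℝ, 0 ≤ t → ∀ x : ℝ,
      deriv (fun s => m1 s x) t + v1 * deriv (fun y => m1 t y) x
        = α12 * (m2 t x - m1 t x))
    (hpdem2 : ∀ t : ℝ, 0 ≤ t → ∀ x : ℝ,
      deriv (fun s => m2 s x) t + v2 * deriv (fun y => m2 t y) x
        = α21 * (m1 t x - m2 t x))
    (hpden1 : ∀ t : ℝ, 0 ≤ t → ∀ x : ℝ,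
      deriv (fun s => n1 s x) t + v1 * deriv (fun y => n1 t y) x
        = α12 * (n2 t x - n1 t x))
    (hpden2 : ∀ t : ℝ, 0 ≤ t → ∀ x : ℝ,
      deriv (fun s => n2 s x) t + v2 * deriv (fun y => n2 t y) x
        = α21 * (n1 t x - n2 t x))
    (hsuppm : ∀ T : ℝ, 0 < T → ∃ R : ℝ, 0 < R ∧ ∀ t x : ℝ,
      0 ≤ t → t ≤ T → R ≤ |x| → m1 t x = 0 ∧ m2 t x = 0)
    (hsuppn : ∀ T : ℝ, 0 < T → ∃ R : ℝ, 0 < R ∧ ∀ t x : ℝ,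
      0 ≤ t → t ≤ T → R ≤ |x| → n1 t x = 0 ∧ n2 t x = 0)
    (hinit1 : ∀ x : ℝ, m1 0 x = n1 0 x)
    (hinit2 : ∀ x : ℝ, m2 0 x = n2 0 x) :
    ∀ t : ℝ, 0 ≤ t → ∀ x : ℝ, m1 t x = n1 t x ∧ m2 t x = n2 t x := by
  intro t ht x
  set T := t + 1
  obtain ⟨Rm, -, hRm⟩ := hsuppm T (by linarith)
  obtain ⟨Rn, -, hRn⟩ := hsuppn T (by linarith)
  have hdm1 := hm1.differentiableOn one_ne_zero
  have hdm2 := hm2.differentiableOn one_ne_zero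
  have hdn1 := hn1.differentiableOn one_ne_zero
  have hdn2 := hn2.differentiableOn one_ne_zero
  have hd1 : DifferentiableOn ℝ (uncurry (m1 - n1)) (Ici 0 ×ˢ univ) := hdm1.sub hdn1
  have hd2 : DifferentiableOn ℝ (uncurry (m2 - n2)) (Ici 0 ×ˢ univ) := hdm2.sub hdn2
  have hsupp (s y : ℝ) (hs : 0 ≤ s) (hsT : s ≤ T) (hy : max Rm Rn ≤ |y|) :
      (m1 - n1) s y = 0 ∧ (m2 - n2) s y = 0 := by
    obtain ⟨hm1y, hm2y⟩ := hRm s y hs hsT ((le_max_left _ _).trans hy)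
    obtain ⟨hn1y, hn2y⟩ := hRn s y hs hsT ((le_max_right _ _).trans hy)
    simp [hm1y, hm2y, hn1y, hn2y]
  obtain ⟨A1, hA1⟩ := exists_abs_le_of_eq_zero_of_le_abs hd1.continuousOn
    fun s y hs hsT hy => (hsupp s y hs hsT hy).1
  obtain ⟨A2, hA2⟩ := exists_abs_le_of_eq_zero_of_le_abs hd2.continuousOn
    fun s y hs hsT hy => (hsupp s y hs hsT hy).2
  have hzero := sync_eq_zero_of_bounded hd1 hd2
    (transportDeriv_sub_of_coupled hdm1 hdn1 (fun s hs => hpdem1 s hs.le)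
      fun s hs => hpden1 s hs.le)
    (transportDeriv_sub_of_coupled hdm2 hdn2 (fun s hs => hpdem2 s hs.le)
      fun s hs => hpden2 s hs.le)
    (fun y => sub_eq_zero.mpr (hinit1 y)) (fun y => sub_eq_zero.mpr (hinit2 y))
    (A := max A1 A2) (fun s hs y => ⟨(hA1 s hs y).trans (le_max_left _ _),
      (hA2 s hs y).trans (le_max_right _ _)⟩) t ⟨ht, by linarith⟩ x
  exact ⟨sub_eq_zero.mp hzero.1, sub_eq_zero.mp hzero.2⟩

/-- Uniqueness: two locally uniformly compactly supported classical solutions of the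
synchronization system with the same initial data coincide on `[0,∞) × ℝ`. -/
theorem stmt_11 (v1 v2 α12 α21 : ℝ) (h12 : 0 < α12) (h21 : 0 < α21)
    (m1 m2 n1 n2 : ℝ → ℝ → ℝ)
    (hm1 : ContDiffOn ℝ 1 (fun p : ℝ × ℝ => m1 p.1 p.2) (Set.Ici 0 ×ˢ Set.univ))
    (hm2 : ContDiffOn ℝ 1 (fun p : ℝ × ℝ => m2 p.1 p.2) (Set.Ici 0 ×ˢ Set.univ))
    (hn1 : ContDiffOn ℝ 1 (fun p : ℝ × ℝ => n1 p.1 p.2) (Set.Ici 0 ×ˢ Set.univ))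
    (hn2 : ContDiffOn ℝ 1 (fun p : ℝ × ℝ => n2 p.1 p.2) (Set.Ici 0 ×ˢ Set.univ))
    (hpdem1 : ∀ t : ℝ, 0 ≤ t → ∀ x : ℝ,
      deriv (fun s => m1 s x) t + v1 * deriv (fun y => m1 t y) x
        = α12 * (m2 t x - m1 t x))
    (hpdem2 : ∀ t : ℝ, 0 ≤ t → ∀ x : ℝ,
      deriv (fun s => m2 s x) t + v2 * deriv (fun y => m2 t y) x
        = α21 * (m1 t x - m2 t x))
    (hpden1 : ∀ t : ℝ, 0 ≤ t → ∀ x : ℝ,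
      deriv (fun s => n1 s x) t + v1 * deriv (fun y => n1 t y) x
        = α12 * (n2 t x - n1 t x))
    (hpden2 : ∀ t : ℝ, 0 ≤ t → ∀ x : ℝ,
      deriv (fun s => n2 s x) t + v2 * deriv (fun y => n2 t y) x
        = α21 * (n1 t x - n2 t x))
    (hsuppm : ∀ T : ℝ, 0 < T → ∃ R : ℝ, 0 < R ∧ ∀ t x : ℝ,
      0 ≤ t → t ≤ T → R ≤ |x| → m1 t x = 0 ∧ m2 t x = 0)
    (hsuppn : ∀ T : ℝ, 0 < T → ∃ R : ℝ, 0 < R ∧ ∀ t x : ℝ,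
      0 ≤ t → t ≤ T → R ≤ |x| → n1 t x = 0 ∧ n2 t x = 0)
    (hinit1 : ∀ x : ℝ, m1 0 x = n1 0 x)
    (hinit2 : ∀ x : ℝ, m2 0 x = n2 0 x) :
    ∀ t : ℝ, 0 ≤ t → ∀ x : ℝ, m1 t x = n1 t x ∧ m2 t x = n2 t x :=
  stmt_11_general v1 v2 α12 α21 m1 m2 n1 n2 hm1 hm2 hn1 hn2 hpdem1 hpdem2 hpden1 hpden2 hsuppm
    hsuppn hinit1 hinit2
end

section
/- Assume v1 ≠ v2 and let v ∈ ℝ be arbitrary. There do not exist continuously differentiable, nonnegative, Lebesgue-integrable functions f1, f2 : ℝ → ℝ with ∫_ℝ f1 = ∫_ℝ f2 = 1 satisfying (v1 − v)·f1'(x) = α12(f2(x) − f1(x)) and (v2 − v)·f2'(x) = α21(f1(x) − f2(x)) for all x ∈ ℝ. Consequently, the synchronization system ∂_t m1 + v1 ∂_x m1 = α12(m2 − m1), ∂_t m2 + v2 ∂_x m2 = α21(m1 − m2) admits no traveling-wave solution m_i(t,x) = f_i(x − vt) with such profiles f1, f2. -/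
/-!
The weighted mass `α21 (v1 - v) f1 + α12 (v2 - v) f2` has zero derivative, and an integrable
constant on `ℝ` vanishes, so it is identically zero. Integrating it, the two weights add up to
zero; they are nonzero because `v1 ≠ v2`, so `f1 = f2`. The profile equations then force
`f1' = 0`, and `f1`, an integrable constant, cannot have mass `1`.
-/

open MeasureTheory

theorem eq_zero_of_integrable_of_deriv_eq_zero {E : Type*} [NormedAddCommGroup E]
    [NormedSpace ℝ E] {f : ℝ → E} (hf : Differentiable ℝ f) (hf' : ∀ x, deriv f x = 0)
    (hint : Integrable f) : f = 0 := by
  have hconst : f = fun _ => f 0 := funext fun x => is_const_of_deriv_eq_zero hf hf' x 0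
  rw [hconst] at hint ⊢
  rcases integrable_const_iff.mp hint with h0 | hfin
  · exact funext fun _ => h0
  · simp [isFiniteMeasure_iff] at hfin

theorem deriv_weighted_sum_eq_zero {f1 f2 : ℝ → ℝ} {c1 c2 α12 α21 : ℝ}
    (hd1 : Differentiable ℝ f1) (hd2 : Differentiable ℝ f2)
    (he1 : ∀ x, c1 * deriv f1 x = α12 * (f2 x - f1 x))
    (he2 : ∀ x, c2 * deriv f2 x = α21 * (f1 x - f2 x)) (x : ℝ) :
    deriv (fun y => α21 * c1 * f1 y + α12 * c2 * f2 y) x = 0 := by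
  refine (((hd1 x).hasDerivAt.const_mul _).add ((hd2 x).hasDerivAt.const_mul _)).deriv.trans ?_
  linear_combination α21 * he1 x + α12 * he2 x

/-- If `v1 ≠ v2`, then for any `v` there are no `C¹`, nonnegative, integrable
probability-density profiles `f1, f2` satisfying
`(v1 - v) f1' = α12 (f2 - f1)` and `(v2 - v) f2' = α21 (f1 - f2)`; consequently the
synchronization system has no traveling-wave solution `m_i(t,x) = f_i(x - v t)`
with such profiles. -/
theorem stmt_12 (v1 v2 α12 α21 : ℝ) (h12 : 0 < α12) (h21 : 0 < α21)
    (hv : v1 ≠ v2) (v : ℝ) :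
    ¬ ∃ f1 f2 : ℝ → ℝ,
        ContDiff ℝ 1 f1 ∧ ContDiff ℝ 1 f2 ∧
        (∀ x : ℝ, 0 ≤ f1 x) ∧ (∀ x : ℝ, 0 ≤ f2 x) ∧
        Integrable f1 ∧ Integrable f2 ∧
        (∫ x : ℝ, f1 x) = 1 ∧ (∫ x : ℝ, f2 x) = 1 ∧
        (∀ x : ℝ, (v1 - v) * deriv f1 x = α12 * (f2 x - f1 x)) ∧
        (∀ x : ℝ, (v2 - v) * deriv f2 x = α21 * (f1 x - f2 x)) := by
  rintro ⟨f1, f2, hc1, hc2, -, -, hi1, hi2, hI1, hI2, he1, he2⟩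
  have hd1 : Differentiable ℝ f1 := hc1.differentiable one_ne_zero
  have hd2 : Differentiable ℝ f2 := hc2.differentiable one_ne_zero
  have hg : (fun x => α21 * (v1 - v) * f1 x + α12 * (v2 - v) * f2 x) = 0 :=
    eq_zero_of_integrable_of_deriv_eq_zero (by fun_prop)
      (deriv_weighted_sum_eq_zero hd1 hd2 he1 he2) ((hi1.const_mul _).add (hi2.const_mul _))
  have hweights : α21 * (v1 - v) + α12 * (v2 - v) = 0 := by
    have := congrArg (fun g : ℝ → ℝ => ∫ x, g x) hg
    simpa [integral_add (hi1.const_mul _) (hi2.const_mul _), integral_const_mul, hI1, hI2]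
      using this
  have hw1 : α21 * (v1 - v) ≠ 0 := by
    intro h
    have h1 : v1 - v = 0 := (mul_eq_zero.mp h).resolve_left h21.ne'
    have h2 : v2 - v = 0 := (mul_eq_zero.mp (by linarith)).resolve_left h12.ne'
    exact hv (by linarith)
  have hg_apply (x : ℝ) : α21 * (v1 - v) * f1 x + α12 * (v2 - v) * f2 x = 0 := congrFun hg x
  have hf (x : ℝ) : f1 x = f2 x := by
    refine sub_eq_zero.mp ((mul_eq_zero.mp ?_).resolve_left hw1)
    linear_combination hg_apply x - f2 x * hweights
  have hderiv (x : ℝ) : deriv f1 x = 0 := by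
    refine (mul_eq_zero.mp ?_).resolve_left (right_ne_zero_of_mul hw1)
    rw [he1 x, hf x, sub_self, mul_zero]
  have hzero := eq_zero_of_integrable_of_deriv_eq_zero hd1 hderiv hi1
  simp [hzero] at hI1
end

section
/- Assume v1 ≠ v2 and set c1 = −i(α21·v1 + α12·v2)/(α12 + α21) and c2 = −α12·α21·(v1 − v2)²/(α12 + α21)³ (so c2 is real and nonzero). Then there exist ε > 0 and a function λ : (−ε, ε) → ℂ such that λ(0) = 0, λ(p) is an eigenvalue of A(p) for every |p| < ε, and λ(p) = c1·p + c2·p² + o(p²) as p → 0. -/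
open Complex Asymptotics

lemma eig_aux_stmt14 (v1 v2 α12 α21 p : ℝ) (lamp : ℂ)
    (hq : lamp ^ 2 + (Complex.I * (v1 + v2) * p + ((α12:ℂ) + α21)) * lamp +
      (-(v1*v2 : ℝ) * (p:ℂ)^2 + Complex.I * p * ((v1*α21 + v2*α12 : ℝ) : ℂ)) = 0) :
    (!![-Complex.I * v1 * p - α12, (α12 : ℂ);
        (α21 : ℂ), -Complex.I * v2 * p - α21]).mulVec
      ![(α12:ℂ), lamp + Complex.I * v1 * p + α12] =
    lamp • ![(α12:ℂ), lamp + Complex.I * v1 * p + α12] := by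
  push_cast at hq
  funext i
  fin_cases i <;>
    simp [Matrix.mulVec, dotProduct, Fin.sum_univ_two] <;>
    push_cast
  · ring
  · linear_combination -hq - (v1:ℂ)*(v2:ℂ)*(p:ℂ)^2 * Complex.I_sq


/-- If `v1 ≠ v2`, set `c1 = -i (α21 v1 + α12 v2)/(α12 + α21)` and
`c2 = -α12 α21 (v1 - v2)² / (α12 + α21)³` (a nonzero real number). Then there exist
`ε > 0` and a branch `lam : ℝ → ℂ` of eigenvalues of `A p` for `|p| < ε` with
`lam 0 = 0` and `lam p = c1 p + c2 p² + o(p²)` as `p → 0`. -/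
theorem stmt_14 (v1 v2 α12 α21 : ℝ) (h12 : 0 < α12) (h21 : 0 < α21)
    (hv : v1 ≠ v2)
    (A : ℝ → Matrix (Fin 2) (Fin 2) ℂ)
    (hA : ∀ p : ℝ, A p =
      !![-Complex.I * v1 * p - α12, (α12 : ℂ);
         (α21 : ℂ), -Complex.I * v2 * p - α21])
    (c1 : ℂ) (c2 : ℝ)
    (hc1 : c1 = -Complex.I * (α21 * v1 + α12 * v2) / (α12 + α21))
    (hc2 : c2 = -(α12 * α21 * (v1 - v2) ^ 2) / (α12 + α21) ^ 3) :
    c2 ≠ 0 ∧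
    ∃ ε : ℝ, 0 < ε ∧ ∃ lam : ℝ → ℂ,
      lam 0 = 0 ∧
      (∀ p : ℝ, |p| < ε → ∃ w : Fin 2 → ℂ, w ≠ 0 ∧ (A p).mulVec w = lam p • w) ∧
      (fun p : ℝ => lam p - (c1 * p + (c2 : ℂ) * p ^ 2)) =o[nhds 0]
        (fun p : ℝ => p ^ 2) := by
  have hA0 : (0:ℝ) < α12 + α21 := by linarith
  have hA0r : (α12 + α21 : ℝ) ≠ 0 := ne_of_gt hA0
  have hA0c : ((α12:ℂ) + α21) ≠ 0 := by
    intro h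
    apply hA0r
    exact_mod_cast (by push_cast at h ⊢; exact_mod_cast h : ((α12 + α21 : ℝ) : ℂ) = 0)
  have h12c : (α12 : ℂ) ≠ 0 := by exact_mod_cast ne_of_gt h12
  refine ⟨?_, ?_⟩
  · rw [hc2]
    have hvne : v1 - v2 ≠ 0 := sub_ne_zero.mpr hv
    apply div_ne_zero
    · simp only [neg_ne_zero]
      positivity
    · positivity
  -- the basic functions
  set aF : ℝ → ℂ := fun p => Complex.I * (v1 + v2) * p + ((α12:ℂ) + α21) with haF
  set bF : ℝ → ℂ := fun p => -(v1*v2 : ℝ) * (p:ℂ)^2 + Complex.I * p * ((v1*α21 + v2*α12 : ℝ) : ℂ) with hbF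
  set DF : ℝ → ℂ := fun p => aF p ^ 2 - 4 * bF p with hDF
  set lam : ℝ → ℂ := fun p => (-(aF p) + DF p ^ ((1:ℂ)/2)) / 2 with hlamdef
  -- value at 0
  have haF0 : aF 0 = ((α12 + α21 : ℝ) : ℂ) := by simp [haF]
  have hDF0 : DF 0 = ((α12 + α21 : ℝ) : ℂ)^2 := by simp [hDF, hbF, haF0]
  have hsqrt0 : DF 0 ^ ((1:ℂ)/2) = ((α12 + α21 : ℝ) : ℂ) := by
    rw [hDF0]
    have h2 : ((α12 + α21 : ℝ) : ℂ)^2 = (((α12 + α21)^2 : ℝ) : ℂ) := by push_cast; ring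
    have hc : ((1:ℂ)/2) = (((1:ℝ)/2 : ℝ) : ℂ) := by norm_num
    rw [h2, hc, ← Complex.ofReal_cpow (by positivity)]
    norm_cast
    rw [show ((α12 + α21)^2 : ℝ) ^ ((1:ℝ)/2) = Real.sqrt ((α12+α21)^2) by
      rw [Real.sqrt_eq_rpow]]
    rw [Real.sqrt_sq hA0.le]
  have hlam0 : lam 0 = 0 := by
    rw [hlamdef]
    simp only
    rw [hsqrt0, haF0]
    ring
  -- continuity
  have haFc : Continuous aF := by rw [haF]; continuity
  have hbFc : Continuous bF := by rw [hbF]; continuity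
  have hDFc : Continuous DF := by rw [hDF]; continuity
  have hre0 : 0 < (DF 0).re := by
    rw [hDF0]
    have : ((α12 + α21 : ℝ) : ℂ)^2 = (((α12 + α21)^2 : ℝ) : ℂ) := by push_cast; ring
    rw [this, Complex.ofReal_re]
    positivity
  -- eventually positive real part
  have hrec : ContinuousAt (fun p : ℝ => (DF p).re) 0 :=
    (Complex.continuous_re.comp hDFc).continuousAt
  have hev : ∀ᶠ p in nhds (0:ℝ), 0 < (DF p).re :=
    hrec.eventually (eventually_gt_nhds hre0)
  -- extract ε
  obtain ⟨ε, hε, hball⟩ := Metric.eventually_nhds_iff.mp hev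
  -- square root property
  have hsq : ∀ p : ℝ, DF p ≠ 0 → (DF p ^ ((1:ℂ)/2))^2 = DF p := by
    intro p hD
    rw [sq, ← Complex.cpow_add _ _ hD]
    norm_num
  -- quadratic equation
  have hquad : ∀ p : ℝ, DF p ≠ 0 → lam p ^ 2 + aF p * lam p + bF p = 0 := by
    intro p hD
    have hs := hsq p hD
    rw [hlamdef]
    simp only
    rw [hDF] at hs
    simp only at hs
    rw [hDF]
    linear_combination hs / 4
  refine ⟨ε, hε, lam, hlam0, ?_, ?_⟩
  · -- eigenvector
    intro p hp
    have hDp : DF p ≠ 0 := by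
      intro h
      have := hball (by simpa [Real.dist_eq] using hp)
      rw [h] at this
      simp at this
    refine ⟨![(α12:ℂ), lam p + Complex.I * v1 * p + α12], ?_, ?_⟩
    · intro h
      have := congrFun h 0
      simp at this
      exact h12c (by exact_mod_cast this)
    · have hq := hquad p hDp
      rw [haF, hbF] at hq
      simp only at hq
      rw [hA p]
      exact eig_aux_stmt14 v1 v2 α12 α21 p (lam p) hq
  · -- asymptotics
    set q : ℝ → ℂ := fun p => c1 * p + (c2:ℂ) * p^2 with hqdef
    set u : ℝ → ℂ := fun p => (2*c1*(c2:ℂ) + Complex.I*(v1+v2)*(c2:ℂ)) + (c2:ℂ)^2 * p with hudef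
    -- the residual identity
    have h1 : ((α12:ℂ)+α21) * c1 + Complex.I*((v1*α21 + v2*α12 : ℝ):ℂ) = 0 := by
      rw [hc1]; push_cast; field_simp; ring
    have h2 : c1^2 + ((α12:ℂ)+α21)*(c2:ℂ) + Complex.I*((v1:ℂ)+v2)*c1 - ((v1*v2 : ℝ):ℂ) = 0 := by
      rw [hc1, hc2]; push_cast; field_simp; ring_nf; simp only [Complex.I_sq]; ring
    have hr : ∀ p : ℝ, q p ^ 2 + aF p * q p + bF p = (p:ℂ)^3 * u p := by
      intro p
      rw [hqdef, haF, hbF, hudef]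
      simp only
      linear_combination (p:ℂ) * h1 + (p:ℂ)^2 * h2
    -- denominator
    set den : ℝ → ℂ := fun p => lam p + q p + aF p with hdendef
    have hlamc : ContinuousAt lam 0 := by
      have h1 : ContinuousAt (fun z : ℂ => z ^ ((1:ℂ)/2)) (DF 0) := by
        apply continuousAt_cpow_const
        exact Or.inl hre0
      have h2 : ContinuousAt (fun p : ℝ => DF p ^ ((1:ℂ)/2)) 0 := h1.comp hDFc.continuousAt
      rw [hlamdef]
      exact ((haFc.continuousAt.neg.add h2).div_const 2)
    have hdenc : Filter.Tendsto den (nhds 0) (nhds ((α12:ℂ)+α21)) := by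
      have : ContinuousAt den 0 := by
        rw [hdendef]
        exact (hlamc.add (by rw [hqdef]; fun_prop)).add haFc.continuousAt
      have hden0 : den 0 = (α12:ℂ)+α21 := by
        rw [hdendef]
        simp only
        rw [hlam0, hqdef, haF0]
        push_cast; ring
      rw [← hden0]
      exact this
    have hdenne : ∀ᶠ p in nhds (0:ℝ), den p ≠ 0 := hdenc.eventually_ne hA0c
    have hdeninv : Filter.Tendsto (fun p => (den p)⁻¹) (nhds (0:ℝ)) (nhds (((α12:ℂ)+α21)⁻¹)) :=
      hdenc.inv₀ hA0c
    have hdenO : (fun p : ℝ => (den p)⁻¹) =O[nhds 0] (fun _ => (1:ℝ)) := hdeninv.isBigO_one ℝ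
    -- r = o(p²)
    have hp3 : (fun p : ℝ => (p:ℂ)^3) =o[nhds 0] (fun p : ℝ => p^2) := by
      have hx : (fun p : ℝ => (p:ℂ)) =o[nhds 0] (fun _ : ℝ => (1:ℝ)) := by
        rw [isLittleO_one_iff]
        exact_mod_cast Complex.continuous_ofReal.tendsto' 0 0 rfl
      have hx2 : (fun p : ℝ => (p:ℂ)^2) =O[nhds 0] (fun p : ℝ => p^2) := by
        apply IsBigO.of_bound 1
        filter_upwards with p
        simp [← Complex.ofReal_pow, abs_nonneg]
      have h := hx.mul_isBigO hx2
      exact h.congr (fun p => by ring) (fun p => by ring)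
    have huO : (fun p : ℝ => u p) =O[nhds 0] (fun _ => (1:ℝ)) := by
      have : ContinuousAt u 0 := by rw [hudef]; fun_prop
      exact this.isBigO_one ℝ
    have hrO : (fun p : ℝ => (p:ℂ)^3 * u p) =o[nhds 0] (fun p : ℝ => p^2) :=
      (hp3.mul_isBigO huO).congr (fun p => rfl) (fun p => mul_one _)
    -- eventually identity  lam - q = -(residual) * den⁻¹
    have hDne : ∀ᶠ p in nhds (0:ℝ), DF p ≠ 0 := by
      filter_upwards [hev] with p h hc
      rw [hc] at h; simp at h
    have heq : ∀ᶠ p in nhds (0:ℝ),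
        lam p - q p = -((p:ℂ)^3 * u p) * (den p)⁻¹ := by
      filter_upwards [hDne, hdenne] with p hD hden
      have hq := hquad p hD
      have hrp := hr p
      have key : (lam p - q p) * den p = -((p:ℂ)^3 * u p) := by
        rw [hdendef]
        simp only
        linear_combination hq - hrp
      rw [← key, mul_assoc, mul_inv_cancel₀ hden, mul_one]
    -- conclude
    have hfinal : (fun p : ℝ => -((p:ℂ)^3 * u p) * (den p)⁻¹) =o[nhds 0]
        (fun p : ℝ => p^2) := by
      exact ((hrO.neg_left).mul_isBigO hdenO).congr (fun p => rfl) (fun p => mul_one _)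
    exact hfinal.congr' (heq.mono fun p h => h.symm) (Filter.EventuallyEq.refl _ _)
end

section
/- Assume v1 ≠ v2. Then there exists ε > 0 such that for every real p with 0 < |p| < ε, every eigenvalue λ ∈ ℂ of A(p) satisfies Re λ < 0. -/
private lemma stmt15_aux (x u v a b : ℝ) (hx : 0 ≤ x) (ha : 0 < a) (hb : 0 < b)
    (hu : u ≠ 0)
    (hEq : ((x + a)^2 + u^2) * ((x + b)^2 + v^2) = (a * b)^2) : False := by
  have hu2 : 0 < u^2 := by positivity
  have f1 : a^2 ≤ (x + a)^2 := by nlinarith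
  have A1 : a^2 + u^2 ≤ (x + a)^2 + u^2 := by linarith
  have A2 : b^2 ≤ (x + b)^2 + v^2 := by nlinarith [sq_nonneg v]
  have B : (a^2 + u^2) * b^2 ≤ ((x + a)^2 + u^2) * ((x + b)^2 + v^2) :=
    mul_le_mul A1 A2 (by positivity) (by positivity)
  rw [hEq] at B
  nlinarith [mul_pos hu2 (pow_pos hb 2)]

/-- If `v1 ≠ v2`, there exists `ε > 0` such that for every real `p` with
`0 < |p| < ε`, every eigenvalue `λ` of `A p` has `Re λ < 0`. -/
theorem stmt_15 (v1 v2 α12 α21 : ℝ) (h12 : 0 < α12) (h21 : 0 < α21)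
    (hv : v1 ≠ v2)
    (A : ℝ → Matrix (Fin 2) (Fin 2) ℂ)
    (hA : ∀ p : ℝ, A p =
      !![-Complex.I * v1 * p - α12, (α12 : ℂ);
         (α21 : ℂ), -Complex.I * v2 * p - α21]) :
    ∃ ε : ℝ, 0 < ε ∧ ∀ p : ℝ, 0 < |p| → |p| < ε →
      ∀ lam : ℂ, (∃ w : Fin 2 → ℂ, w ≠ 0 ∧ (A p).mulVec w = lam • w) →
        lam.re < 0 := by
  refine ⟨1, one_pos, fun p hp _ lam ⟨w, hw, hmul⟩ => ?_⟩
  have hp0 : p ≠ 0 := fun h => by simp [h] at hp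
  have h0 := congrFun hmul 0
  have h1 := congrFun hmul 1
  simp [hA, Matrix.mulVec, dotProduct, Fin.sum_univ_two] at h0 h1
  -- rewrite as factored equations
  have e0 : (α12 : ℂ) * w 1 = (lam + Complex.I * v1 * p + α12) * w 0 := by
    linear_combination h0
  have e1 : (α21 : ℂ) * w 0 = (lam + Complex.I * v2 * p + α21) * w 1 := by
    linear_combination h1
  have hw0 : w 0 ≠ 0 := by
    intro h
    have : w 1 = 0 := by
      have := e0
      rw [h, mul_zero] at this
      exact (mul_eq_zero.mp this).resolve_left (by exact_mod_cast h12.ne')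
    apply hw; funext i; fin_cases i <;> simp [h, this]
  have hw1 : w 1 ≠ 0 := by
    intro h
    have : w 0 = 0 := by
      have := e1
      rw [h, mul_zero] at this
      exact (mul_eq_zero.mp this).resolve_left (by exact_mod_cast h21.ne')
    apply hw; funext i; fin_cases i <;> simp [h, this]
  have key : (lam + Complex.I * v1 * p + α12) * (lam + Complex.I * v2 * p + α21)
      = (α12 : ℂ) * α21 := by
    apply mul_right_cancel₀ (b := w 0 * w 1) (mul_ne_zero hw0 hw1)
    calc (lam + Complex.I * v1 * p + α12) * (lam + Complex.I * v2 * p + α21) * (w 0 * w 1)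
          = ((lam + Complex.I * v1 * p + α12) * w 0) * ((lam + Complex.I * v2 * p + α21) * w 1) := by ring
        _ = ((α12 : ℂ) * w 1) * ((α21 : ℂ) * w 0) := by rw [e0, e1]
        _ = (α12 : ℂ) * α21 * (w 0 * w 1) := by ring
  -- take normSq
  set x := lam.re with hx
  set y := lam.im with hy
  have n1 : Complex.normSq (lam + Complex.I * v1 * p + α12) = (x + α12)^2 + (y + v1*p)^2 := by
    simp [Complex.normSq_apply, Complex.add_re, Complex.add_im, Complex.mul_re, Complex.mul_im]
    ring
  have n2 : Complex.normSq (lam + Complex.I * v2 * p + α21) = (x + α21)^2 + (y + v2*p)^2 := by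
    simp [Complex.normSq_apply, Complex.add_re, Complex.add_im, Complex.mul_re, Complex.mul_im]
    ring
  have hns := congrArg Complex.normSq key
  rw [Complex.normSq_mul, n1, n2] at hns
  have hR : ((x + α12)^2 + (y + v1*p)^2) * ((x + α21)^2 + (y + v2*p)^2)
      = (α12 * α21)^2 := by
    rw [hns]
    rw [← Complex.ofReal_mul]
    rw [Complex.normSq_ofReal]
    ring
  by_contra hc
  push_neg at hc
  have huv : (y + v1*p) ≠ 0 ∨ (y + v2*p) ≠ 0 := by
    by_contra h
    push_neg at h
    have : (v1 - v2) * p = 0 := by linear_combination h.1 - h.2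
    rcases mul_eq_zero.mp this with h' | h'
    · exact hv (by linarith)
    · exact hp0 h'
  rcases huv with h | h
  · exact stmt15_aux x (y + v1*p) (y + v2*p) α12 α21 hc h12 h21 h hR
  · exact stmt15_aux x (y + v2*p) (y + v1*p) α21 α12 hc h21 h12 h
      (by linear_combination hR)
end

section
/- For every x = (x^{(1)}, x^{(2)}) ∈ ℝ^{N1} × ℝ^{N2}, |(L(F²))(x) − 2·F(x)·(LF)(x)| ≤ 4·α12·‖ψ1‖_C²/N1 + 4·α21·‖ψ2‖_C²/N2, uniformly in x. -/
open Finset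

/-!
Since `L` acts on the drift part as a first-order derivation, the drift terms cancel in
`L(F²) − 2 F · LF`, and what remains is the carré du champ of the jumps,
`(α12/N2) Σ_{i,j} (F(x_{i→j}) − F(x))² + (α21/N1) Σ_{j,i} (F(x_{i←j}) − F(x))²`.
A jump changes a single coordinate, so `F` moves by `(ψ1(x_j^{(2)}) − ψ1(x_i^{(1)}))/N1`
(resp. the analogue for `ψ2`), whose square is at most `4‖ψ1‖²/N1²`; there are `N1 N2` such
terms.
-/

/-- The generator of the synchronization particle system: its action on a function
`f : ℝ^{N1} × ℝ^{N2} → ℝ` at a configuration `x`. -/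
noncomputable def syncGenerator (v1 v2 α12 α21 : ℝ) (N1 N2 : ℕ)
    (f : (Fin N1 → ℝ) × (Fin N2 → ℝ) → ℝ)
    (x : (Fin N1 → ℝ) × (Fin N2 → ℝ)) : ℝ :=
  v1 * ∑ i : Fin N1, fderiv ℝ f x (Pi.single i 1, 0) +
  v2 * ∑ j : Fin N2, fderiv ℝ f x (0, Pi.single j 1) +
  (α12 / N2) * ∑ i : Fin N1, ∑ j : Fin N2,
    (f (Function.update x.1 i (x.2 j), x.2) - f x) +
  (α21 / N1) * ∑ j : Fin N2, ∑ i : Fin N1,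
    (f (x.1, Function.update x.2 j (x.1 i)) - f x)

/-- The empirical test functional `F(x) = (1/N1) Σ ψ1(x_i^{(1)}) + (1/N2) Σ ψ2(x_j^{(2)})`. -/
noncomputable def syncTestF (ψ1 ψ2 : ℝ → ℝ) (N1 N2 : ℕ)
    (x : (Fin N1 → ℝ) × (Fin N2 → ℝ)) : ℝ :=
  (1 / N1) * ∑ i : Fin N1, ψ1 (x.1 i) + (1 / N2) * ∑ j : Fin N2, ψ2 (x.2 j)

theorem sum_comp_update_sub {ι β M : Type*} [Fintype ι] [DecidableEq ι] [AddCommGroup M]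
    (ψ : β → M) (y : ι → β) (i : ι) (a : β) :
    ∑ k, ψ (Function.update y i a k) - ∑ k, ψ (y k) = ψ a - ψ (y i) := by
  rw [Fintype.sum_eq_add_sum_compl i, Fintype.sum_eq_add_sum_compl i (fun k => ψ (y k)),
    Function.update_self]
  have hcompl : ∑ k ∈ {i}ᶜ, ψ (Function.update y i a k) = ∑ k ∈ {i}ᶜ, ψ (y k) :=
    sum_congr rfl fun k hk => by
      rw [Function.update_of_ne (by simpa using hk)]
  rw [hcompl]
  abel

theorem abs_sub_le_two_mul_iSup_abs {α : Type*} {ψ : α → ℝ}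
    (hψ : BddAbove (Set.range fun y => |ψ y|)) (a b : α) :
    |ψ a - ψ b| ≤ 2 * ⨆ y, |ψ y| :=
  calc |ψ a - ψ b| ≤ |ψ a| + |ψ b| := abs_sub _ _
    _ ≤ (⨆ y, |ψ y|) + ⨆ y, |ψ y| := add_le_add (le_ciSup hψ a) (le_ciSup hψ b)
    _ = 2 * ⨆ y, |ψ y| := by ring

theorem mul_sum_sum_sq_div_le {m n : ℕ} {α M : ℝ} (hα : 0 ≤ α) {d : Fin m → Fin n → ℝ}
    (hd : ∀ a b, |d a b| ≤ 2 * M) :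
    α / n * ∑ a, ∑ b, (d a b / m) ^ 2 ≤ 4 * α * M ^ 2 / m := by
  have hterm : ∀ a b, (d a b / m) ^ 2 ≤ (2 * M) ^ 2 / m ^ 2 := fun a b => by
    rw [div_pow]
    gcongr ?_ / _
    exact sq_le_sq.2 ((hd a b).trans (le_abs_self _))
  calc α / n * ∑ a, ∑ b, (d a b / m) ^ 2
      ≤ α / n * ∑ _a : Fin m, ∑ _b : Fin n, (2 * M) ^ 2 / m ^ 2 := by
        gcongr with a _ b _
        exact hterm a b
    _ = α * (n / n) * (4 * M ^ 2 * (m / m ^ 2)) := by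
        simp only [sum_const, card_univ, Fintype.card_fin, nsmul_eq_mul]
        ring
    _ ≤ α * 1 * (4 * M ^ 2 * (m / m ^ 2)) := by
        gcongr
        exact div_self_le_one _
    _ = 4 * α * M ^ 2 / m := by
        rw [pow_two (m : ℝ), div_self_mul_self']
        ring

section SyncSystem

variable {v1 v2 α12 α21 : ℝ} {N1 N2 : ℕ}

theorem syncGenerator_sq_sub_two_mul {f : (Fin N1 → ℝ) × (Fin N2 → ℝ) → ℝ}
    {x : (Fin N1 → ℝ) × (Fin N2 → ℝ)} (hf : DifferentiableAt ℝ f x) :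
    syncGenerator v1 v2 α12 α21 N1 N2 (fun y => f y ^ 2) x -
        2 * f x * syncGenerator v1 v2 α12 α21 N1 N2 f x =
      α12 / N2 * ∑ i, ∑ j, (f (Function.update x.1 i (x.2 j), x.2) - f x) ^ 2 +
      α21 / N1 * ∑ j, ∑ i, (f (x.1, Function.update x.2 j (x.1 i)) - f x) ^ 2 := by
  have hsq : ∀ a c : ℝ, a ^ 2 - c ^ 2 = (a - c) ^ 2 + 2 * c * (a - c) := fun a c => by ring
  simp only [syncGenerator, fderiv_fun_pow 2 hf, smul_apply, smul_eq_mul,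
    hsq, sum_add_distrib, ← mul_sum]
  ring

variable {ψ1 ψ2 : ℝ → ℝ}

theorem syncTestF_update_fst_sub (x : (Fin N1 → ℝ) × (Fin N2 → ℝ)) (i : Fin N1) (a : ℝ) :
    syncTestF ψ1 ψ2 N1 N2 (Function.update x.1 i a, x.2) - syncTestF ψ1 ψ2 N1 N2 x =
      (ψ1 a - ψ1 (x.1 i)) / N1 := by
  rw [← sum_comp_update_sub ψ1 x.1 i a]
  simp only [syncTestF]
  ring

theorem syncTestF_update_snd_sub (x : (Fin N1 → ℝ) × (Fin N2 → ℝ)) (j : Fin N2) (a : ℝ) :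
    syncTestF ψ1 ψ2 N1 N2 (x.1, Function.update x.2 j a) - syncTestF ψ1 ψ2 N1 N2 x =
      (ψ2 a - ψ2 (x.2 j)) / N2 := by
  rw [← sum_comp_update_sub ψ2 x.2 j a]
  simp only [syncTestF]
  ring

end SyncSystem

theorem stmt_18_general (v1 v2 α12 α21 : ℝ) (h12 : 0 < α12) (h21 : 0 < α21)
    (N1 N2 : ℕ)
    (ψ1 ψ2 : ℝ → ℝ)
    (hψ1 : ContDiff ℝ 1 ψ1) (hψ2 : ContDiff ℝ 1 ψ2)
    (hψ1b : ∃ C : ℝ, ∀ x : ℝ, |ψ1 x| ≤ C)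
    (hψ2b : ∃ C : ℝ, ∀ x : ℝ, |ψ2 x| ≤ C) :
    ∀ x : (Fin N1 → ℝ) × (Fin N2 → ℝ),
      |syncGenerator v1 v2 α12 α21 N1 N2
          (fun y => (syncTestF ψ1 ψ2 N1 N2 y) ^ 2) x -
        2 * syncTestF ψ1 ψ2 N1 N2 x *
          syncGenerator v1 v2 α12 α21 N1 N2 (syncTestF ψ1 ψ2 N1 N2) x| ≤
      4 * α12 * (⨆ y : ℝ, |ψ1 y|) ^ 2 / N1 +
      4 * α21 * (⨆ y : ℝ, |ψ2 y|) ^ 2 / N2 := by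
  intro x
  have hF : DifferentiableAt ℝ (syncTestF ψ1 ψ2 N1 N2) x := by
    have := hψ1.differentiable one_ne_zero
    have := hψ2.differentiable one_ne_zero
    unfold syncTestF
    fun_prop
  have hbdd : ∀ ψ : ℝ → ℝ, (∃ C : ℝ, ∀ x, |ψ x| ≤ C) → BddAbove (Set.range fun y => |ψ y|) :=
    fun _ ⟨C, hC⟩ => ⟨C, Set.forall_mem_range.2 hC⟩
  rw [syncGenerator_sq_sub_two_mul hF]
  simp only [syncTestF_update_fst_sub, syncTestF_update_snd_sub]
  rw [abs_of_nonneg (by positivity)]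
  exact add_le_add
    (mul_sum_sum_sq_div_le h12.le fun _ _ => abs_sub_le_two_mul_iSup_abs (hbdd ψ1 hψ1b) _ _)
    (mul_sum_sum_sq_div_le h21.le fun _ _ => abs_sub_le_two_mul_iSup_abs (hbdd ψ2 hψ2b) _ _)

/-- Uniform bound for the carré du champ:
`|L(F²)(x) − 2 F(x) LF(x)| ≤ 4 α12 ‖ψ1‖_C² / N1 + 4 α21 ‖ψ2‖_C² / N2`. -/
theorem stmt_18 (v1 v2 α12 α21 : ℝ) (h12 : 0 < α12) (h21 : 0 < α21)
    (N1 N2 : ℕ) (hN1 : 0 < N1) (hN2 : 0 < N2)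
    (ψ1 ψ2 : ℝ → ℝ)
    (hψ1 : ContDiff ℝ 1 ψ1) (hψ2 : ContDiff ℝ 1 ψ2)
    (hψ1b : ∃ C : ℝ, ∀ x : ℝ, |ψ1 x| ≤ C)
    (hψ2b : ∃ C : ℝ, ∀ x : ℝ, |ψ2 x| ≤ C)
    (hψ1db : ∃ C : ℝ, ∀ x : ℝ, |deriv ψ1 x| ≤ C)
    (hψ2db : ∃ C : ℝ, ∀ x : ℝ, |deriv ψ2 x| ≤ C) :
    ∀ x : (Fin N1 → ℝ) × (Fin N2 → ℝ),
      |syncGenerator v1 v2 α12 α21 N1 N2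
          (fun y => (syncTestF ψ1 ψ2 N1 N2 y) ^ 2) x -
        2 * syncTestF ψ1 ψ2 N1 N2 x *
          syncGenerator v1 v2 α12 α21 N1 N2 (syncTestF ψ1 ψ2 N1 N2) x| ≤
      4 * α12 * (⨆ y : ℝ, |ψ1 y|) ^ 2 / N1 +
      4 * α21 * (⨆ y : ℝ, |ψ2 y|) ^ 2 / N2 :=
  stmt_18_general v1 v2 α12 α21 h12 h21 N1 N2 ψ1 ψ2 hψ1 hψ2 hψ1b hψ2b
end
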